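/- arXiv:1611.04971 — 2 statements merged into one kernel-verified Lean document; each statement's English description precedes it below -/
import Mathlib

section
/- Under metric compatibility of the Poisson-compatible connection ∇, the order-λ correction to the quantum dimension equals (λ/2){g_{μν}, g^{μν}}; explicitly, −λ ω^{αβ} g^{μν}_{,α} Γ_{νβμ} = (λ/2) ω^{αβ} g_{μν,α} g^{μν}_{,β}. -/
/-!
Since `g^{μν}_{,α}` is symmetric in `μ ν`, contracting it with `Γ_{νβμ}` only sees the
symmetrisation `Γ_{μβν} + Γ_{νβμ}`, which metric compatibility identifies with `g_{μν,β}`.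
Hence the left side is `-(λ/2) ω^{αβ} g^{μν}_{,α} g_{μν,β}`, and exchanging `α` and `β`
with the antisymmetry of `ω` turns this into the right side.
-/

/-- Partial derivative of `f : (Fin n → ℝ) → ℝ` in the `i`-th coordinate direction. -/
noncomputable def pd {n : ℕ} (i : Fin n) (f : (Fin n → ℝ) → ℝ) (x : Fin n → ℝ) : ℝ :=
  fderiv ℝ f x (Pi.single i 1)

section IndexSums

open Finset

variable {ι R : Type*} [Fintype ι]

theorem two_mul_sum_sum_mul_transpose_of_symm [CommSemiring R] {A B : ι → ι → R}
    (hA : ∀ i j, A i j = A j i) :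
    2 * ∑ i, ∑ j, A i j * B j i = ∑ i, ∑ j, A i j * (B i j + B j i) := by
  have hswap : ∑ i, ∑ j, A i j * B i j = ∑ i, ∑ j, A i j * B j i := by
    rw [sum_comm]
    exact sum_congr rfl fun i _ => sum_congr rfl fun j _ => by rw [hA]
  simp only [mul_add, sum_add_distrib, hswap, two_mul]

theorem sum_sum_mul_transpose_of_antisymm [CommRing R] {ω F : ι → ι → R}
    (hω : ∀ i j, ω i j = -ω j i) :
    ∑ i, ∑ j, ω i j * F j i = -∑ i, ∑ j, ω i j * F i j := by
  rw [sum_comm, ← sum_neg_distrib]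
  refine sum_congr rfl fun i _ => ?_
  rw [← sum_neg_distrib]
  exact sum_congr rfl fun j _ => by rw [hω j i, neg_mul]

end IndexSums

theorem pd_congr_of_symm {n : ℕ} {f : Fin n → Fin n → (Fin n → ℝ) → ℝ}
    (hf : ∀ μ ν x, f μ ν x = f ν μ x) (i μ ν : Fin n) (x : Fin n → ℝ) :
    pd i (f μ ν) x = pd i (f ν μ) x := by
  rw [show f μ ν = f ν μ from funext (hf μ ν)]

theorem stmt3_general (n : ℕ)
    (g ginv ω : Fin n → Fin n → (Fin n → ℝ) → ℝ)
    (Γ : Fin n → Fin n → Fin n → (Fin n → ℝ) → ℝ)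
    (hginv_symm : ∀ μ ν x, ginv μ ν x = ginv ν μ x)
    (hω_anti : ∀ α β x, ω α β x = -ω β α x)
    (hΓ_compat : ∀ β μ ν x,
      pd β (g μ ν) x = (∑ δ, g μ δ x * Γ δ β ν x) + ∑ δ, g ν δ x * Γ δ β μ x) :
    ∀ (lam : ℝ) (x : Fin n → ℝ),
      -lam * ∑ α, ∑ β, ∑ μ, ∑ ν,
          ω α β x * pd α (ginv μ ν) x * (∑ δ, g ν δ x * Γ δ β μ x)
      = (lam/2) * ∑ α, ∑ β, ω α β x *
          ∑ μ, ∑ ν, pd α (g μ ν) x * pd β (ginv μ ν) x := by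
  intro lam x
  set P : Fin n → Fin n → ℝ := fun α β => ∑ μ, ∑ ν, pd α (ginv μ ν) x * pd β (g μ ν) x
  have hcontract : ∀ α β,
      2 * ∑ μ, ∑ ν, pd α (ginv μ ν) x * (∑ δ, g ν δ x * Γ δ β μ x) = P α β := by
    intro α β
    rw [two_mul_sum_sum_mul_transpose_of_symm (B := fun μ ν => ∑ δ, g μ δ x * Γ δ β ν x)
      fun μ ν => pd_congr_of_symm hginv_symm α μ ν x]
    simp only [P, hΓ_compat]
  have hrhs : ∑ α, ∑ β, ω α β x * ∑ μ, ∑ ν, pd α (g μ ν) x * pd β (ginv μ ν) x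
      = -∑ α, ∑ β, ω α β x * P α β := by
    rw [← sum_sum_mul_transpose_of_antisymm fun α β => hω_anti α β x]
    simp only [P, mul_comm (pd _ (g _ _) x)]
  rw [hrhs]
  simp only [← hcontract, Finset.mul_sum, ← Finset.sum_neg_distrib]
  ring_nf

/-- Under metric compatibility of the quantising connection, the order-`λ` correction to
the quantum dimension equals `(λ/2){g_{μν}, g^{μν}}`:
`−λ ω^{αβ} g^{μν}_{,α} Γ_{νβμ} = (λ/2) ω^{αβ} g_{μν,α} g^{μν}_{,β}`. -/
theorem stmt3 (n : ℕ)
    (g ginv ω : Fin n → Fin n → (Fin n → ℝ) → ℝ)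
    (Γ : Fin n → Fin n → Fin n → (Fin n → ℝ) → ℝ)
    (hg_symm : ∀ μ ν x, g μ ν x = g ν μ x)
    (hginv_symm : ∀ μ ν x, ginv μ ν x = ginv ν μ x)
    (hω_anti : ∀ α β x, ω α β x = -ω β α x)
    (h_inv : ∀ α β x, ∑ δ, g α δ x * ginv δ β x = if α = β then (1:ℝ) else 0)
    (h_inv' : ∀ α β x, ∑ δ, ginv α δ x * g δ β x = if α = β then (1:ℝ) else 0)
    (hdg : ∀ μ ν, Differentiable ℝ (g μ ν))
    (hdginv : ∀ μ ν, Differentiable ℝ (ginv μ ν))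
    (hΓ_compat : ∀ β μ ν x,
      pd β (g μ ν) x = (∑ δ, g μ δ x * Γ δ β ν x) + ∑ δ, g ν δ x * Γ δ β μ x) :
    ∀ (lam : ℝ) (x : Fin n → ℝ),
      -lam * ∑ α, ∑ β, ∑ μ, ∑ ν,
          ω α β x * pd α (ginv μ ν) x * (∑ δ, g ν δ x * Γ δ β μ x)
      = (lam/2) * ∑ α, ∑ β, ω α β x *
          ∑ μ, ∑ ν, pd α (g μ ν) x * pd β (ginv μ ν) x :=
  stmt3_general n g ginv ω Γ hginv_symm hω_anti hΓ_compat
end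

section
/- The Schwarzschild metric g = −(1 − r_S/r) dt⊗dt + (1 − r_S/r)^{−1} dr⊗dr + r² dΩ² is Ricci flat: R̂_{μν} = 0 for all μ,ν, on the region r > r_S. -/
/-- The Schwarzschild metric in coordinates `x = (t, r, θ, φ)`:
`g = −(1 − r_S/r)dt⊗dt + (1 − r_S/r)⁻¹dr⊗dr + r²(dθ⊗dθ + sin²θ dφ⊗dφ)`. -/
noncomputable def gSch (rS : ℝ) (μ ν : Fin 4) (x : Fin 4 → ℝ) : ℝ :=
  if μ = 0 ∧ ν = 0 then -(1 - rS / x 1)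
  else if μ = 1 ∧ ν = 1 then (1 - rS / x 1)⁻¹
  else if μ = 2 ∧ ν = 2 then (x 1)^2
  else if μ = 3 ∧ ν = 3 then (x 1)^2 * (Real.sin (x 2))^2
  else 0

/-- The inverse Schwarzschild metric. -/
noncomputable def ginvSch (rS : ℝ) (μ ν : Fin 4) (x : Fin 4 → ℝ) : ℝ :=
  if μ = 0 ∧ ν = 0 then -(1 - rS / x 1)⁻¹
  else if μ = 1 ∧ ν = 1 then 1 - rS / x 1
  else if μ = 2 ∧ ν = 2 then 1 / (x 1)^2
  else if μ = 3 ∧ ν = 3 then 1 / ((x 1)^2 * (Real.sin (x 2))^2)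
  else 0

/-- Levi-Civita Christoffel symbols of the Schwarzschild metric. -/
noncomputable def ΓSch (rS : ℝ) (μ α β : Fin 4) (x : Fin 4 → ℝ) : ℝ :=
  (1/2) * ∑ ν, ginvSch rS μ ν x *
    (pd β (gSch rS ν α) x + pd α (gSch rS ν β) x - pd ν (gSch rS α β) x)

/-- Ricci tensor of the Levi-Civita connection of the Schwarzschild metric. -/
noncomputable def RicSch (rS : ℝ) (μ ν : Fin 4) (x : Fin 4 → ℝ) : ℝ :=
  (∑ α, pd α (fun y => ΓSch rS α μ ν y) x)
    - pd ν (fun y => ∑ α, ΓSch rS α μ α y) x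
    + ∑ α, ∑ β, (ΓSch rS α α β x * ΓSch rS β μ ν x - ΓSch rS α ν β x * ΓSch rS β μ α x)

/-!
On the region `r > r_S`, `sin θ ≠ 0` the Christoffel symbols coincide with their classical
closed form, nine of them independent and nonzero. The region is open, so the coordinate
derivatives entering the Ricci tensor may be taken of the closed form as well. Each `R_{μν}` then
becomes a rational identity in `r`, `sin θ`, `cos θ` that holds using only `sin² θ + cos² θ = 1`.
-/

open Filter Topology Real

theorem Fin.four_cases (a : Fin 4) : a = 0 ∨ a = 1 ∨ a = 2 ∨ a = 3 := by
  fin_cases a <;> simp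

section PartialDerivative

variable {n : ℕ} {x : Fin n → ℝ} {f : (Fin n → ℝ) → ℝ}

theorem pd_congr {g : (Fin n → ℝ) → ℝ} (h : f =ᶠ[𝓝 x] g) (i : Fin n) :
    pd i f x = pd i g x := by
  rw [pd, pd, h.fderiv_eq]

theorem pd_eq_zero_of_forall (hf : ∀ y, f y = 0) (i : Fin n) : pd i f x = 0 := by
  simp [pd, funext hf]

theorem hasFDerivAt_comp_apply {R : ℝ → ℝ} {R' : ℝ} {j : Fin n} (hR : HasDerivAt R R' (x j)) :
    HasFDerivAt (fun y => R (y j)) (R' • ContinuousLinearMap.proj (R := ℝ) (φ := fun _ => ℝ) j) x :=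
  hR.comp_hasFDerivAt x (hasFDerivAt_apply j x)

theorem pd_comp_apply {R : ℝ → ℝ} {R' : ℝ} {j : Fin n} (hR : HasDerivAt R R' (x j)) (i : Fin n) :
    pd i (fun y => R (y j)) x = if i = j then R' else 0 := by
  rw [pd, (hasFDerivAt_comp_apply hR).fderiv]
  by_cases h : i = j <;> simp [h]

theorem pd_of_forall_eq_comp_apply {R : ℝ → ℝ} {R' : ℝ} {j : Fin n} (hf : ∀ y, f y = R (y j))
    (hR : HasDerivAt R R' (x j)) (i : Fin n) : pd i f x = if i = j then R' else 0 := by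
  rw [funext hf, pd_comp_apply hR]

theorem pd_of_forall_eq_comp_apply_mul {R Θ : ℝ → ℝ} {R' Θ' : ℝ} {j k : Fin n}
    (hf : ∀ y, f y = R (y j) * Θ (y k)) (hR : HasDerivAt R R' (x j)) (hΘ : HasDerivAt Θ Θ' (x k))
    (i : Fin n) :
    pd i f x = (if i = j then R' else 0) * Θ (x k) + R (x j) * (if i = k then Θ' else 0) := by
  rw [← pd_comp_apply hR, ← pd_comp_apply hΘ, funext hf, pd, pd, pd, fderiv_fun_mul
    (hasFDerivAt_comp_apply hR).differentiableAt (hasFDerivAt_comp_apply hΘ).differentiableAt]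
  simp only [add_apply, smul_apply, smul_eq_mul]
  ring

end PartialDerivative

theorem hasDerivAt_const_div {c r : ℝ} (hr : r ≠ 0) :
    HasDerivAt (fun s => c / s) (-(c / r ^ 2)) r :=
  ((hasDerivAt_const r c).div (hasDerivAt_id r) hr).congr_deriv (by simp [neg_div])

theorem hasDerivAt_sin_sq (θ : ℝ) : HasDerivAt (fun t => sin t ^ 2) (2 * sin θ * cos θ) θ :=
  ((hasDerivAt_sin θ).pow 2).congr_deriv (by ring)

theorem hasDerivAt_cos_div_sin {θ : ℝ} (hs : sin θ ≠ 0) :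
    HasDerivAt (fun t => cos t / sin t) (-(1 / sin θ ^ 2)) θ := by
  refine ((hasDerivAt_cos θ).div (hasDerivAt_sin θ) hs).congr_deriv ?_
  rw [neg_mul, ← neg_add', ← sq, ← sq, sin_sq_add_cos_sq, neg_div]

theorem hasDerivAt_const_div_two_mul_mul_sub {c r : ℝ} (hr : r ≠ 0) (hc : r ≠ c) :
    HasDerivAt (fun s => c / (2 * s * (s - c)))
      (-(c * (2 * r - c)) / (2 * r ^ 2 * (r - c) ^ 2)) r := by
  have hc' : r - c ≠ 0 := sub_ne_zero.mpr hc
  have hd : HasDerivAt (fun s => 2 * s * (s - c)) (2 * 1 * (r - c) + 2 * r * 1) r :=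
    ((hasDerivAt_id' r).const_mul 2).mul ((hasDerivAt_id' r).sub_const c)
  refine ((hasDerivAt_const r c).div hd (by simp [hr, hc'])).congr_deriv ?_
  field_simp
  ring

theorem hasDerivAt_mul_sub_div_two_mul_pow_three {c r : ℝ} (hr : r ≠ 0) :
    HasDerivAt (fun s => c * (s - c) / (2 * s ^ 3)) (c * (3 * c - 2 * r) / (2 * r ^ 4)) r := by
  refine ((((hasDerivAt_id' r).sub_const c).const_mul c).div
    ((hasDerivAt_pow 3 r).const_mul 2) (by simp [hr])).congr_deriv ?_
  field_simp
  ring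

section Schwarzschild

variable {rS : ℝ} {x : Fin 4 → ℝ}

/-- `dgSch rS i α β = ∂_i g_{αβ}`. -/
noncomputable def dgSch (rS : ℝ) (i α β : Fin 4) (x : Fin 4 → ℝ) : ℝ :=
  if i = 1 ∧ α = 0 ∧ β = 0 then -(rS / x 1 ^ 2)
  else if i = 1 ∧ α = 1 ∧ β = 1 then -(rS / (x 1 - rS) ^ 2)
  else if i = 1 ∧ α = 2 ∧ β = 2 then 2 * x 1
  else if i = 1 ∧ α = 3 ∧ β = 3 then 2 * x 1 * sin (x 2) ^ 2
  else if i = 2 ∧ α = 3 ∧ β = 3 then x 1 ^ 2 * (2 * sin (x 2) * cos (x 2))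
  else 0

theorem pd_gSch (hr : x 1 ≠ 0) (hu : x 1 ≠ rS) (i α β : Fin 4) :
    pd i (gSch rS α β) x = dgSch rS i α β x := by
  have h00 : HasDerivAt (fun s => -(1 - rS / s)) (-(rS / x 1 ^ 2)) (x 1) :=
    ((hasDerivAt_const_div hr).const_sub 1).neg.congr_deriv (neg_neg _)
  have h11 : HasDerivAt (fun s => (1 - rS / s)⁻¹) (-(rS / (x 1 - rS) ^ 2)) (x 1) := by
    have hu' : x 1 - rS ≠ 0 := sub_ne_zero.mpr hu
    have hne : 1 - rS / x 1 ≠ 0 := by rw [one_sub_div hr]; exact div_ne_zero hu' hr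
    refine (((hasDerivAt_const_div hr).const_sub 1).inv hne).congr_deriv ?_
    rw [one_sub_div hr]
    field_simp
  have hsq : HasDerivAt (fun s : ℝ => s ^ 2) (2 * x 1) (x 1) := by
    simpa using hasDerivAt_pow 2 (x 1)
  rcases Fin.four_cases i with rfl | rfl | rfl | rfl <;>
    rcases Fin.four_cases α with rfl | rfl | rfl | rfl <;>
    rcases Fin.four_cases β with rfl | rfl | rfl | rfl <;>
    first
    | (refine (pd_eq_zero_of_forall (fun y => ?_) _).trans ?_ <;> simp [gSch, dgSch]; done)
    | (refine (pd_of_forall_eq_comp_apply (fun y => ?_) h00 _).trans ?_ <;>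
        simp [gSch, dgSch]; done)
    | (refine (pd_of_forall_eq_comp_apply (fun y => ?_) h11 _).trans ?_ <;>
        simp [gSch, dgSch]; done)
    | (refine (pd_of_forall_eq_comp_apply (fun y => ?_) hsq _).trans ?_ <;>
        simp [gSch, dgSch]; done)
    | (refine (pd_of_forall_eq_comp_apply_mul (fun y => ?_) hsq (hasDerivAt_sin_sq (x 2)) _).trans
        ?_ <;> simp [gSch, dgSch])

/-- `ΓSchFormula rS μ α β = Γ^μ_{αβ}`, in closed form. -/
noncomputable def ΓSchFormula (rS : ℝ) (μ α β : Fin 4) (y : Fin 4 → ℝ) : ℝ :=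
  if μ = 0 ∧ (α = 0 ∧ β = 1 ∨ α = 1 ∧ β = 0) then rS / (2 * y 1 * (y 1 - rS))
  else if μ = 1 ∧ α = 0 ∧ β = 0 then rS * (y 1 - rS) / (2 * y 1 ^ 3)
  else if μ = 1 ∧ α = 1 ∧ β = 1 then -(rS / (2 * y 1 * (y 1 - rS)))
  else if μ = 1 ∧ α = 2 ∧ β = 2 then -(y 1 - rS)
  else if μ = 1 ∧ α = 3 ∧ β = 3 then -(y 1 - rS) * sin (y 2) ^ 2
  else if μ = 2 ∧ (α = 1 ∧ β = 2 ∨ α = 2 ∧ β = 1) ∨ μ = 3 ∧ (α = 1 ∧ β = 3 ∨ α = 3 ∧ β = 1) then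
    1 / y 1
  else if μ = 2 ∧ α = 3 ∧ β = 3 then -(sin (y 2) * cos (y 2))
  else if μ = 3 ∧ (α = 2 ∧ β = 3 ∨ α = 3 ∧ β = 2) then cos (y 2) / sin (y 2)
  else 0

theorem ΓSch_eq_formula (hr : x 1 ≠ 0) (hu : x 1 ≠ rS) (hs : sin (x 2) ≠ 0) (μ α β : Fin 4) :
    ΓSch rS μ α β x = ΓSchFormula rS μ α β x := by
  have hu' : x 1 - rS ≠ 0 := sub_ne_zero.mpr hu
  rcases Fin.four_cases μ with rfl | rfl | rfl | rfl <;>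
    rcases Fin.four_cases α with rfl | rfl | rfl | rfl <;>
    rcases Fin.four_cases β with rfl | rfl | rfl | rfl <;>
    simp only [ΓSch, Fin.sum_univ_four, pd_gSch hr hu] <;>
    simp [ginvSch, dgSch, ΓSchFormula, one_sub_div hr] <;>
    field_simp <;>
    ring

theorem eventually_ΓSch_eq_formula (hr : x 1 ≠ 0) (hu : x 1 ≠ rS) (hs : sin (x 2) ≠ 0) :
    ∀ᶠ y in 𝓝 x, ∀ μ α β, ΓSch rS μ α β y = ΓSchFormula rS μ α β y := by
  have h1 : ContinuousAt (fun y : Fin 4 → ℝ => y 1) x := (continuous_apply 1).continuousAt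
  have h2 : ContinuousAt (fun y : Fin 4 → ℝ => sin (y 2)) x :=
    (continuous_sin.comp (continuous_apply 2)).continuousAt
  filter_upwards [h1.eventually_ne hr, h1.eventually_ne hu, h2.eventually_ne hs] with y hr hu hs
  exact ΓSch_eq_formula hr hu hs

/-- `dΓSch rS i μ α β = ∂_i Γ^μ_{αβ}`. -/
noncomputable def dΓSch (rS : ℝ) (i μ α β : Fin 4) (x : Fin 4 → ℝ) : ℝ :=
  if i = 1 ∧ μ = 0 ∧ (α = 0 ∧ β = 1 ∨ α = 1 ∧ β = 0) then
    -(rS * (2 * x 1 - rS)) / (2 * x 1 ^ 2 * (x 1 - rS) ^ 2)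
  else if i = 1 ∧ μ = 1 ∧ α = 0 ∧ β = 0 then rS * (3 * rS - 2 * x 1) / (2 * x 1 ^ 4)
  else if i = 1 ∧ μ = 1 ∧ α = 1 ∧ β = 1 then rS * (2 * x 1 - rS) / (2 * x 1 ^ 2 * (x 1 - rS) ^ 2)
  else if i = 1 ∧ μ = 1 ∧ α = 2 ∧ β = 2 then -1
  else if i = 1 ∧ μ = 1 ∧ α = 3 ∧ β = 3 then -sin (x 2) ^ 2
  else if i = 2 ∧ μ = 1 ∧ α = 3 ∧ β = 3 then -(x 1 - rS) * (2 * sin (x 2) * cos (x 2))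
  else if i = 1 ∧ (μ = 2 ∧ (α = 1 ∧ β = 2 ∨ α = 2 ∧ β = 1) ∨
      μ = 3 ∧ (α = 1 ∧ β = 3 ∨ α = 3 ∧ β = 1)) then -(1 / x 1 ^ 2)
  else if i = 2 ∧ μ = 2 ∧ α = 3 ∧ β = 3 then sin (x 2) ^ 2 - cos (x 2) ^ 2
  else if i = 2 ∧ μ = 3 ∧ (α = 2 ∧ β = 3 ∨ α = 3 ∧ β = 2) then -(1 / sin (x 2) ^ 2)
  else 0

theorem pd_ΓSchFormula (hr : x 1 ≠ 0) (hu : x 1 ≠ rS) (hs : sin (x 2) ≠ 0) (i μ α β : Fin 4) :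
    pd i (ΓSchFormula rS μ α β) x = dΓSch rS i μ α β x := by
  have h001 := hasDerivAt_const_div_two_mul_mul_sub hr hu
  have h100 := hasDerivAt_mul_sub_div_two_mul_pow_three (c := rS) hr
  have h111 : HasDerivAt (fun s => -(rS / (2 * s * (s - rS))))
      (rS * (2 * x 1 - rS) / (2 * x 1 ^ 2 * (x 1 - rS) ^ 2)) (x 1) :=
    h001.neg.congr_deriv (by ring)
  have h122 : HasDerivAt (fun s => -(s - rS)) (-1) (x 1) :=
    ((hasDerivAt_id' (x 1)).sub_const rS).neg
  have h233 : HasDerivAt (fun t => -(sin t * cos t)) (sin (x 2) ^ 2 - cos (x 2) ^ 2) (x 2) :=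
    ((hasDerivAt_sin (x 2)).mul (hasDerivAt_cos (x 2))).neg.congr_deriv (by ring)
  have h212 : HasDerivAt (fun s => 1 / s) (-(1 / x 1 ^ 2)) (x 1) := hasDerivAt_const_div hr
  have h323 := hasDerivAt_cos_div_sin hs
  rcases Fin.four_cases μ with rfl | rfl | rfl | rfl <;>
    rcases Fin.four_cases α with rfl | rfl | rfl | rfl <;>
    rcases Fin.four_cases β with rfl | rfl | rfl | rfl <;>
    first
    | (refine (pd_eq_zero_of_forall (fun y => ?_) _).trans ?_ <;> simp [ΓSchFormula, dΓSch]; done)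
    | (refine (pd_of_forall_eq_comp_apply (fun y => ?_) h001 _).trans ?_ <;>
        simp [ΓSchFormula, dΓSch]; done)
    | (refine (pd_of_forall_eq_comp_apply (fun y => ?_) h100 _).trans ?_ <;>
        simp [ΓSchFormula, dΓSch]; done)
    | (refine (pd_of_forall_eq_comp_apply (fun y => ?_) h111 _).trans ?_ <;>
        simp [ΓSchFormula, dΓSch]; done)
    | (refine (pd_of_forall_eq_comp_apply (fun y => ?_) h122 _).trans ?_ <;>
        simp [ΓSchFormula, dΓSch]; done)
    | (refine (pd_of_forall_eq_comp_apply (fun y => ?_) h212 _).trans ?_ <;>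
        simp [ΓSchFormula, dΓSch]; done)
    | (refine (pd_of_forall_eq_comp_apply (fun y => ?_) h233 _).trans ?_ <;>
        simp [ΓSchFormula, dΓSch]; done)
    | (refine (pd_of_forall_eq_comp_apply (fun y => ?_) h323 _).trans ?_ <;>
        simp [ΓSchFormula, dΓSch]; done)
    | (refine (pd_of_forall_eq_comp_apply_mul (fun y => ?_) h122 (hasDerivAt_sin_sq (x 2)) _).trans
        ?_ <;> rcases Fin.four_cases i with rfl | rfl | rfl | rfl <;> simp [ΓSchFormula, dΓSch])

theorem pd_ΓSch (hr : x 1 ≠ 0) (hu : x 1 ≠ rS) (hs : sin (x 2) ≠ 0) (i μ α β : Fin 4) :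
    pd i (ΓSch rS μ α β) x = dΓSch rS i μ α β x :=
  (pd_congr ((eventually_ΓSch_eq_formula hr hu hs).mono fun _ h => h μ α β) i).trans
    (pd_ΓSchFormula hr hu hs i μ α β)

-- `Γ^α_{μα} = ∂_μ log √|det g| = ∂_μ log (r² sin θ)`
theorem sum_ΓSchFormula_contract (μ : Fin 4) (y : Fin 4 → ℝ) :
    ∑ α, ΓSchFormula rS α μ α y =
      if μ = 1 then 2 / y 1 else if μ = 2 then cos (y 2) / sin (y 2) else 0 := by
  rcases Fin.four_cases μ with rfl | rfl | rfl | rfl <;> simp [Fin.sum_univ_four, ΓSchFormula]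
  ring

theorem pd_sum_ΓSch_contract (hr : x 1 ≠ 0) (hu : x 1 ≠ rS) (hs : sin (x 2) ≠ 0) (μ ν : Fin 4) :
    pd ν (fun y => ∑ α, ΓSch rS α μ α y) x =
      if μ = 1 ∧ ν = 1 then -(2 / x 1 ^ 2)
      else if μ = 2 ∧ ν = 2 then -(1 / sin (x 2) ^ 2) else 0 := by
  have htrace : (fun y => ∑ α, ΓSch rS α μ α y) =ᶠ[𝓝 x]
      fun y => if μ = 1 then 2 / y 1 else if μ = 2 then cos (y 2) / sin (y 2) else 0 :=
    (eventually_ΓSch_eq_formula hr hu hs).mono fun y h => by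
      simp only [h, sum_ΓSchFormula_contract]
  rw [pd_congr htrace]
  rcases Fin.four_cases μ with rfl | rfl | rfl | rfl
  · simp [pd_eq_zero_of_forall]
  · simp [pd_comp_apply (hasDerivAt_const_div (c := 2) hr)]
  · simp [pd_comp_apply (hasDerivAt_cos_div_sin hs)]
  · simp [pd_eq_zero_of_forall]

end Schwarzschild

/-- The Schwarzschild metric is Ricci flat on the region `r > r_S`. -/
theorem stmt11 (rS : ℝ) (hrS : 0 < rS) :
    ∀ x : Fin 4 → ℝ, rS < x 1 → Real.sin (x 2) ≠ 0 →
      ∀ μ ν, RicSch rS μ ν x = 0 := by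
  intro x hx hs μ ν
  have hr : x 1 ≠ 0 := (hrS.trans hx).ne'
  have hu : x 1 ≠ rS := hx.ne'
  simp only [RicSch, pd_sum_ΓSch_contract hr hu hs]
  simp only [pd_ΓSch hr hu hs, ΓSch_eq_formula hr hu hs, Fin.sum_univ_four]
  rcases Fin.four_cases μ with rfl | rfl | rfl | rfl <;>
    rcases Fin.four_cases ν with rfl | rfl | rfl | rfl <;>
    simp [dΓSch, ΓSchFormula] <;> field_simp <;>
    first | ring1 | linear_combination -x 1 * sin_sq_add_cos_sq (x 2)
end
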